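/- arXiv:1408.0483 — 2 statements merged into one kernel-verified Lean document; each statement's English description precedes it below -/
import Mathlib

section
/- The operator Ŷ + Ŷ⁻¹ preserves the subspace ℂ[X + X⁻¹] of symmetric Laurent polynomials, and on this subspace it coincides with the Macdonald operator: for every symmetric Laurent polynomial f, (Ŷ + Ŷ⁻¹)(f) = L_{q,t}(f), where (L_{q,t} f)(X) = ((t·X⁻¹ − t⁻¹·X)/(X⁻¹ − X))·f(q⁻²X) + ((t⁻¹·X⁻¹ − t·X)/(X⁻¹ − X))·f(q²X). -/
/-!
Multiplying the defining relation of `T̂` by `-X⁻¹` gives, for every `g`,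
`(X⁻¹ - X) (T̂ + t⁻¹) g = (t X⁻¹ - t⁻¹ X) g + (t⁻¹ X⁻¹ - t X) ŝg`. The right side is
`ŝ`-antisymmetric, so `(T̂ + t⁻¹) g` is symmetric. Symmetric polynomials are `t`-eigenvectors
of `T̂`, whence the Hecke relation `(T̂ - t)(T̂ + t⁻¹) = 0`, i.e. `T̂⁻¹ = T̂ - (t - t⁻¹)`.
For symmetric `f` this gives `Ŷ f = t g` and `Ŷ⁻¹ f = (T̂ - (t - t⁻¹)) g` with `g = f(q⁻²X)`,
so `(Ŷ + Ŷ⁻¹) f = (T̂ + t⁻¹) g`, and the identity above with `ŝg = f(q²X)` is the Macdonald formula.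
-/

namespace LaurentPolynomial

theorem linearMap_ext_T {R M : Type*} [CommSemiring R] [AddCommMonoid M] [Module R M]
    {f g : R[T;T⁻¹] →ₗ[R] M} (h : ∀ n, f (T n) = g (T n)) : f = g := by
  ext n
  exact h n

theorem T_sub_T_ne_zero {R : Type*} [Ring R] [Nontrivial R] {m n : ℤ} (h : m ≠ n) :
    (T m - T n : R[T;T⁻¹]) ≠ 0 := by
  refine sub_ne_zero.2 fun e => h ?_
  simpa [eq_comm] using congrArg (·.coeff m) e

theorem apply_eq_invert_of_apply_T {R : Type*} [CommSemiring R] {s : Module.End R R[T;T⁻¹]}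
    (hs : ∀ n, s (T n) = T (-n)) (f : R[T;T⁻¹]) : s f = invert f :=
  LinearMap.congr_fun (linearMap_ext_T (g := invert.toLinearMap) fun n => by simp [hs]) f

section Shift

variable {K : Type*} [Field K] {q : K} {yhm yhp : Module.End K K[T;T⁻¹]}

theorem invert_apply_eq_apply_invert_of_apply_T (hym : ∀ n : ℤ, yhm (T n) = q ^ (-2 * n) • T n)
    (hyp : ∀ n : ℤ, yhp (T n) = q ^ (2 * n) • T n) (f : K[T;T⁻¹]) :
    invert (yhm f) = yhp (invert f) :=
  LinearMap.congr_fun (linearMap_ext_T (f := invert.toLinearMap ∘ₗ yhm)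
    (g := yhp ∘ₗ invert.toLinearMap) fun n => by simp [hym, hyp]) f

theorem apply_apply_eq_self_of_apply_T (hq : q ≠ 0)
    (hym : ∀ n : ℤ, yhm (T n) = q ^ (-2 * n) • T n)
    (hyp : ∀ n : ℤ, yhp (T n) = q ^ (2 * n) • T n) (f : K[T;T⁻¹]) : yhm (yhp f) = f :=
  LinearMap.congr_fun (linearMap_ext_T (f := yhm ∘ₗ yhp) (g := LinearMap.id) fun n => by
    simp [hym, hyp, smul_smul, mul_inv_cancel₀ (zpow_ne_zero _ hq)]) f

end Shift

/-- `T̂` given by its defining formula cleared of the denominator `X² - 1`. -/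
def IsDemazureLusztig {K : Type*} [Field K] (t : K) (Th : Module.End K K[T;T⁻¹]) : Prop :=
  ∀ f, (T 2 - 1) * Th f = t • ((T 2 - 1) * invert f) + (t - t⁻¹) • (invert f - f)

namespace IsDemazureLusztig

variable {K : Type*} [Field K] {t : K} {Th : Module.End K K[T;T⁻¹]}

theorem apply_of_invert_eq (hT : IsDemazureLusztig t Th) {u : K[T;T⁻¹]} (hu : invert u = u) :
    Th u = t • u := by
  refine mul_left_cancel₀ (T_zero (R := K) ▸ T_sub_T_ne_zero (by norm_num : (2 : ℤ) ≠ 0)) ?_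
  rw [hT u, hu, sub_self, smul_zero, add_zero, mul_smul_comm]

theorem sub_mul_add_inv_smul (hT : IsDemazureLusztig t Th) (g : K[T;T⁻¹]) :
    (T (-1) - T 1) * (Th g + t⁻¹ • g)
      = (t • T (-1) - t⁻¹ • T 1) * g + (t⁻¹ • T (-1) - t • T 1) * invert g := by
  have h := hT g
  have h21 : (T (-1) * T 2 : K[T;T⁻¹]) = T 1 := by rw [← T_add]; norm_num
  simp only [smul_eq_C_mul, map_sub] at h ⊢
  linear_combination (-T (-1)) * h + (Th g - C t * invert g) * h21

theorem invert_add_inv_smul (hT : IsDemazureLusztig t Th) (g : K[T;T⁻¹]) :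
    invert (Th g + t⁻¹ • g) = Th g + t⁻¹ • g := by
  refine mul_left_cancel₀ (T_sub_T_ne_zero (R := K) (by norm_num : (-1 : ℤ) ≠ 1)) ?_
  have h := hT.sub_mul_add_inv_smul g
  have h' := congrArg invert h
  rw [map_add, map_smul]
  simp only [map_mul, map_add, map_sub, map_smul, invert_T, neg_neg, involutive_invert g] at h'
  simp only [smul_eq_C_mul] at h h' ⊢
  linear_combination -h' - h

theorem apply_apply_sub_smul (hT : IsDemazureLusztig t Th) (ht : t ≠ 0) (g : K[T;T⁻¹]) :
    Th (Th g - (t - t⁻¹) • g) = g := by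
  have h := hT.apply_of_invert_eq (hT.invert_add_inv_smul g)
  rw [map_add, map_smul, smul_add, smul_smul, mul_inv_cancel₀ ht, one_smul] at h
  rw [map_sub, map_smul]
  linear_combination (norm := module) h

end IsDemazureLusztig

end LaurentPolynomial

open LaurentPolynomial in
theorem macdonald_operator_on_symmetric_general (q t : ℂ) (hq : q ≠ 0) (ht : t ≠ 0)
    (sh yhm yhp Th Yinv : Module.End ℂ (LaurentPolynomial ℂ))
    (hs : ∀ n : ℤ, sh (T n) = T (-n))
    (hym : ∀ n : ℤ, yhm (T n) = q ^ (-2 * n) • T n)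
    (hyp : ∀ n : ℤ, yhp (T n) = q ^ (2 * n) • T n)
    (hT : ∀ f, (T 2 - 1) * Th f = t • ((T 2 - 1) * sh f) + (t - t⁻¹) • (sh f - f))
    (hYinv2 : Yinv * (yhm * sh * Th) = 1) :
    ∀ f : LaurentPolynomial ℂ, sh f = f →
      sh ((yhm * sh * Th + Yinv) f) = (yhm * sh * Th + Yinv) f ∧
      (T (-1) - T 1) * ((yhm * sh * Th + Yinv) f) =
        (t • T (-1) - t⁻¹ • T 1) * yhm f + (t⁻¹ • T (-1) - t • T 1) * yhp f := by
  intro f hf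
  have hsh := apply_eq_invert_of_apply_T hs
  have hDL : IsDemazureLusztig t Th := fun g => by simpa only [hsh] using hT g
  rw [hsh] at hf
  have hg : invert (yhm f) = yhp f := by
    rw [invert_apply_eq_apply_invert_of_apply_T hym hyp, hf]
  have hY : (yhm * sh * Th) f = t • yhm f := by
    simp only [Module.End.mul_apply, hsh, hDL.apply_of_invert_eq hf, map_smul, hf]
  have hYinv : Yinv f = Th (yhm f) - (t - t⁻¹) • yhm f := by
    calc Yinv f = Yinv ((yhm * sh * Th) (Th (yhm f) - (t - t⁻¹) • yhm f)) := by
          rw [Module.End.mul_apply, Module.End.mul_apply, hDL.apply_apply_sub_smul ht, hsh, hg,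
            apply_apply_eq_self_of_apply_T hq hym hyp]
      _ = _ := LinearMap.congr_fun hYinv2 _
  have hsum : (yhm * sh * Th + Yinv) f = Th (yhm f) + t⁻¹ • yhm f := by
    rw [LinearMap.add_apply, hY, hYinv]
    module
  rw [hsum, hsh, ← hg]
  exact ⟨hDL.invert_add_inv_smul _, hDL.sub_mul_add_inv_smul _⟩

open LaurentPolynomial in
/-- The operator `Ŷ + Ŷ⁻¹` (where `Ŷ = ŷ ∘ ŝ ∘ T̂`) preserves the subspace of symmetric
Laurent polynomials, and on it coincides with the Macdonald operator `L_{q,t}`: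
for symmetric `f`,
`(X⁻¹ - X)·(Ŷ + Ŷ⁻¹)f = (t·X⁻¹ - t⁻¹·X)·f(q⁻²X) + (t⁻¹·X⁻¹ - t·X)·f(q²X)`.
Here `ŝ(f)(X) = f(X⁻¹)`, `yhm : f(X) ↦ f(q⁻²X)`, `yhp : f(X) ↦ f(q²X)`, `T̂` is the
Demazure–Lusztig operator and `Yinv` is the inverse of `Ŷ = yhm ∘ ŝ ∘ T̂`. -/
theorem macdonald_operator_on_symmetric (q t : ℂ) (hq : q ≠ 0) (ht : t ≠ 0)
    (sh yhm yhp Th Yinv : Module.End ℂ (LaurentPolynomial ℂ))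
    (hs : ∀ n : ℤ, sh (T n) = T (-n))
    (hym : ∀ n : ℤ, yhm (T n) = q ^ (-2 * n) • T n)
    (hyp : ∀ n : ℤ, yhp (T n) = q ^ (2 * n) • T n)
    (hT : ∀ f, (T 2 - 1) * Th f = t • ((T 2 - 1) * sh f) + (t - t⁻¹) • (sh f - f))
    (hYinv1 : (yhm * sh * Th) * Yinv = 1)
    (hYinv2 : Yinv * (yhm * sh * Th) = 1) :
    ∀ f : LaurentPolynomial ℂ, sh f = f →
      sh ((yhm * sh * Th + Yinv) f) = (yhm * sh * Th + Yinv) f ∧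
      (T (-1) - T 1) * ((yhm * sh * Th + Yinv) f) =
        (t • T (-1) - t⁻¹ • T 1) * yhm f + (t⁻¹ • T (-1) - t • T 1) * yhp f :=
  macdonald_operator_on_symmetric_general q t hq ht sh yhm yhp Th Yinv hs hym hyp hT hYinv2
end

section
/- The assignments τ⁺(X) = X, τ⁺(T) = T, τ⁺(Y) = q⁻¹·X·Y, and τ⁻(X) = q·Y·X, τ⁻(T) = T, τ⁻(Y) = Y extend (uniquely) to ℂ-algebra automorphisms τ⁺ and τ⁻ of the double affine Hecke algebra H_{q,t}. -/
noncomputable section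

/-- Generators of the double affine Hecke algebra of type `A₁`. -/
inductive DGen : Type
  | X | Xi | Y | Yi | T

/-- The defining relations of the double affine Hecke algebra `H_{q,t}` of type `A₁`. -/
inductive DahaRel (q t : ℂ) : FreeAlgebra ℂ DGen → FreeAlgebra ℂ DGen → Prop
  | XXi : DahaRel q t (FreeAlgebra.ι ℂ DGen.X * FreeAlgebra.ι ℂ DGen.Xi) 1
  | XiX : DahaRel q t (FreeAlgebra.ι ℂ DGen.Xi * FreeAlgebra.ι ℂ DGen.X) 1
  | YYi : DahaRel q t (FreeAlgebra.ι ℂ DGen.Y * FreeAlgebra.ι ℂ DGen.Yi) 1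
  | YiY : DahaRel q t (FreeAlgebra.ι ℂ DGen.Yi * FreeAlgebra.ι ℂ DGen.Y) 1
  | TXT : DahaRel q t
      (FreeAlgebra.ι ℂ DGen.T * FreeAlgebra.ι ℂ DGen.X * FreeAlgebra.ι ℂ DGen.T)
      (FreeAlgebra.ι ℂ DGen.Xi)
  | TYiT : DahaRel q t
      (FreeAlgebra.ι ℂ DGen.T * FreeAlgebra.ι ℂ DGen.Yi * FreeAlgebra.ι ℂ DGen.T)
      (FreeAlgebra.ι ℂ DGen.Y)
  | XY : DahaRel q t (FreeAlgebra.ι ℂ DGen.X * FreeAlgebra.ι ℂ DGen.Y)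
      ((q ^ 2) • (FreeAlgebra.ι ℂ DGen.Y * FreeAlgebra.ι ℂ DGen.X *
        FreeAlgebra.ι ℂ DGen.T * FreeAlgebra.ι ℂ DGen.T))
  | hecke : DahaRel q t
      ((FreeAlgebra.ι ℂ DGen.T - algebraMap ℂ (FreeAlgebra ℂ DGen) t) *
        (FreeAlgebra.ι ℂ DGen.T + algebraMap ℂ (FreeAlgebra ℂ DGen) t⁻¹)) 0

/-- The double affine Hecke algebra `H_{q,t}` of type `A₁`. -/
abbrev DAHA (q t : ℂ) : Type := RingQuot (DahaRel q t)

/-- The generator `X` of `H_{q,t}`. -/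
def Xg (q t : ℂ) : DAHA q t := RingQuot.mkAlgHom ℂ (DahaRel q t) (FreeAlgebra.ι ℂ DGen.X)
/-- The generator `X⁻¹` of `H_{q,t}`. -/
def Xig (q t : ℂ) : DAHA q t := RingQuot.mkAlgHom ℂ (DahaRel q t) (FreeAlgebra.ι ℂ DGen.Xi)
/-- The generator `Y` of `H_{q,t}`. -/
def Yg (q t : ℂ) : DAHA q t := RingQuot.mkAlgHom ℂ (DahaRel q t) (FreeAlgebra.ι ℂ DGen.Y)
/-- The generator `Y⁻¹` of `H_{q,t}`. -/
def Yig (q t : ℂ) : DAHA q t := RingQuot.mkAlgHom ℂ (DahaRel q t) (FreeAlgebra.ι ℂ DGen.Yi)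
/-- The generator `T` of `H_{q,t}`. -/
def Tg (q t : ℂ) : DAHA q t := RingQuot.mkAlgHom ℂ (DahaRel q t) (FreeAlgebra.ι ℂ DGen.T)

/-!
`H_{q,t}` is presented by generators and relations, so algebra maps out of it correspond to
units `x`, `y` and an element `τ` with `τxτ = x⁻¹`, `τy⁻¹τ = y`, `xy = q²yxτ²` and the Hecke
relation; in particular such a map is determined by the images of `X`, `Y`, `T`. The maps `τ⁺`,
`τ⁻` and their inverses (`Y ↦ qX⁻¹Y`, resp. `X ↦ q⁻¹Y⁻¹X`) fix `T`, so the Hecke relation is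
automatic, and the remaining relations reduce to `TY⁻¹X⁻¹T = q⁻²XY`, `TYXT = q⁻²X⁻¹Y⁻¹` and
`TY⁻¹XT = q²X⁻¹Y` in `H_{q,t}`; the last needs `T` invertible, i.e. `t ≠ 0`.
-/

theorem isUnit_of_hecke {K A : Type*} [Field K] [Ring A] [Algebra K A] {τ : A} {t : K}
    (ht : t ≠ 0) (h : (τ - algebraMap K A t) * (τ + algebraMap K A t⁻¹) = 0) : IsUnit τ := by
  have hinv : τ * (τ + algebraMap K A (t⁻¹ - t)) = 1 := by
    simp only [Algebra.algebraMap_eq_smul_one, sub_mul, mul_add, smul_mul_assoc,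
      mul_smul_comm, one_mul, mul_one, smul_sub, smul_smul, inv_mul_cancel₀ ht, one_smul] at h ⊢
    linear_combination (norm := module) h
  have hcomm : Commute τ (τ + algebraMap K A (t⁻¹ - t)) :=
    (Commute.refl τ).add_right (Algebra.commute_algebraMap_right _ τ)
  exact ⟨⟨τ, _, hinv, hcomm.eq ▸ hinv⟩, rfl⟩

namespace DAHA

variable {q t : ℂ}

theorem Xg_mul_Xig : Xg q t * Xig q t = 1 := by
  simpa [Xg, Xig] using RingQuot.mkAlgHom_rel ℂ (DahaRel.XXi (q := q) (t := t))

theorem Xig_mul_Xg : Xig q t * Xg q t = 1 := by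
  simpa [Xg, Xig] using RingQuot.mkAlgHom_rel ℂ (DahaRel.XiX (q := q) (t := t))

theorem Yg_mul_Yig : Yg q t * Yig q t = 1 := by
  simpa [Yg, Yig] using RingQuot.mkAlgHom_rel ℂ (DahaRel.YYi (q := q) (t := t))

theorem Yig_mul_Yg : Yig q t * Yg q t = 1 := by
  simpa [Yg, Yig] using RingQuot.mkAlgHom_rel ℂ (DahaRel.YiY (q := q) (t := t))

theorem Tg_mul_Xg_mul_Tg : Tg q t * Xg q t * Tg q t = Xig q t := by
  simpa [Tg, Xg, Xig] using RingQuot.mkAlgHom_rel ℂ (DahaRel.TXT (q := q) (t := t))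

theorem Tg_mul_Yig_mul_Tg : Tg q t * Yig q t * Tg q t = Yg q t := by
  simpa [Tg, Yg, Yig] using RingQuot.mkAlgHom_rel ℂ (DahaRel.TYiT (q := q) (t := t))

theorem Xg_mul_Yg : Xg q t * Yg q t = q ^ 2 • (Yg q t * Xg q t * Tg q t * Tg q t) := by
  simpa [Xg, Yg, Tg] using RingQuot.mkAlgHom_rel ℂ (DahaRel.XY (q := q) (t := t))

theorem Tg_hecke :
    (Tg q t - algebraMap ℂ (DAHA q t) t) * (Tg q t + algebraMap ℂ (DAHA q t) t⁻¹) = 0 := by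
  simpa [Tg] using RingQuot.mkAlgHom_rel ℂ (DahaRel.hecke (q := q) (t := t))

theorem Xg_mul_Xig_mul (a : DAHA q t) : Xg q t * (Xig q t * a) = a := by
  rw [← mul_assoc, Xg_mul_Xig, one_mul]

theorem Xig_mul_Xg_mul (a : DAHA q t) : Xig q t * (Xg q t * a) = a := by
  rw [← mul_assoc, Xig_mul_Xg, one_mul]

theorem Yg_mul_Yig_mul (a : DAHA q t) : Yg q t * (Yig q t * a) = a := by
  rw [← mul_assoc, Yg_mul_Yig, one_mul]

theorem Yig_mul_Yg_mul (a : DAHA q t) : Yig q t * (Yg q t * a) = a := by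
  rw [← mul_assoc, Yig_mul_Yg, one_mul]

abbrev unitX (q t : ℂ) : (DAHA q t)ˣ := ⟨Xg q t, Xig q t, Xg_mul_Xig, Xig_mul_Xg⟩

abbrev unitY (q t : ℂ) : (DAHA q t)ˣ := ⟨Yg q t, Yig q t, Yg_mul_Yig, Yig_mul_Yg⟩

@[simp] theorem val_inv_unitX : ((unitX q t)⁻¹ : (DAHA q t)ˣ) = Xig q t := rfl
@[simp] theorem val_inv_unitY : ((unitY q t)⁻¹ : (DAHA q t)ˣ) = Yig q t := rfl

theorem isUnit_Tg (ht : t ≠ 0) : IsUnit (Tg q t) := isUnit_of_hecke ht Tg_hecke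

section lift

variable {A : Type*} [Ring A] [Algebra ℂ A]

def genImage (x y : Aˣ) (τ : A) : DGen → A
  | .X => x
  | .Xi => ↑x⁻¹
  | .Y => y
  | .Yi => ↑y⁻¹
  | .T => τ

def lift (x y : Aˣ) (τ : A) (hx : τ * x * τ = ↑x⁻¹) (hy : τ * ↑y⁻¹ * τ = y)
    (hxy : (x * y : A) = q ^ 2 • (y * x * τ * τ))
    (hτ : (τ - algebraMap ℂ A t) * (τ + algebraMap ℂ A t⁻¹) = 0) : DAHA q t →ₐ[ℂ] A :=
  RingQuot.liftAlgHom ℂ ⟨FreeAlgebra.lift ℂ (genImage x y τ), by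
    rintro _ _ (_ | _ | _ | _ | _ | _ | _ | _) <;> simp [genImage, hx, hy, hxy, hτ]⟩

variable (x y : Aˣ) (τ : A) (hx : τ * x * τ = ↑x⁻¹) (hy : τ * ↑y⁻¹ * τ = y)
    (hxy : (x * y : A) = q ^ 2 • (y * x * τ * τ))
    (hτ : (τ - algebraMap ℂ A t) * (τ + algebraMap ℂ A t⁻¹) = 0)

@[simp] theorem lift_Xg : lift x y τ hx hy hxy hτ (Xg q t) = x := by
  simp [lift, Xg, genImage]

@[simp] theorem lift_Xig : lift x y τ hx hy hxy hτ (Xig q t) = ↑x⁻¹ := by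
  simp [lift, Xig, genImage]

@[simp] theorem lift_Yg : lift x y τ hx hy hxy hτ (Yg q t) = y := by
  simp [lift, Yg, genImage]

@[simp] theorem lift_Yig : lift x y τ hx hy hxy hτ (Yig q t) = ↑y⁻¹ := by
  simp [lift, Yig, genImage]

@[simp] theorem lift_Tg : lift x y τ hx hy hxy hτ (Tg q t) = τ := by
  simp [lift, Tg, genImage]

end lift

theorem algHom_ext {A : Type*} [Ring A] [Algebra ℂ A] {f g : DAHA q t →ₐ[ℂ] A}
    (hX : f (Xg q t) = g (Xg q t)) (hY : f (Yg q t) = g (Yg q t))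
    (hT : f (Tg q t) = g (Tg q t)) : f = g := by
  have hXi : f (Xig q t) = g (Xig q t) := left_inv_eq_right_inv
    (by rw [← map_mul, Xig_mul_Xg, map_one]) (by rw [hX, ← map_mul, Xg_mul_Xig, map_one])
  have hYi : f (Yig q t) = g (Yig q t) := left_inv_eq_right_inv
    (by rw [← map_mul, Yig_mul_Yg, map_one]) (by rw [hY, ← map_mul, Yg_mul_Yig, map_one])
  refine RingQuot.ringQuot_ext' _ _ _ <| FreeAlgebra.hom_ext <| funext fun d => ?_
  cases d <;> assumption

theorem Tg_mul_Yig_mul_Xig_mul_Tg (hq : q ≠ 0) :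
    Tg q t * Yig q t * Xig q t * Tg q t = (q ^ 2)⁻¹ • (Xg q t * Yg q t) := by
  calc Tg q t * Yig q t * Xig q t * Tg q t
      = Tg q t * Yig q t * (Tg q t * Xg q t * Tg q t) * Tg q t := by rw [Tg_mul_Xg_mul_Tg]
    _ = (Tg q t * Yig q t * Tg q t) * Xg q t * Tg q t * Tg q t := by simp only [mul_assoc]
    _ = (q ^ 2)⁻¹ • (Xg q t * Yg q t) := by
      rw [Tg_mul_Yig_mul_Tg, Xg_mul_Yg, inv_smul_smul₀ (pow_ne_zero 2 hq)]

theorem Xig_mul_Yig : Xig q t * Yig q t = q ^ 2 • (Tg q t * Tg q t * Yig q t * Xig q t) := by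
  calc Xig q t * Yig q t = Xig q t * Yig q t * (Xg q t * Yg q t) * Yig q t * Xig q t := by
        simp only [mul_assoc, Yg_mul_Yig_mul, Xg_mul_Xig, mul_one]
    _ = q ^ 2 • (Tg q t * Tg q t * Yig q t * Xig q t) := by
        rw [Xg_mul_Yg]
        simp only [mul_smul_comm, smul_mul_assoc, mul_assoc, Xig_mul_Xg_mul, Yig_mul_Yg_mul]

theorem Tg_mul_Yg_mul_Xg_mul_Tg (hq : q ≠ 0) :
    Tg q t * Yg q t * Xg q t * Tg q t = (q ^ 2)⁻¹ • (Xig q t * Yig q t) := by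
  calc Tg q t * Yg q t * Xg q t * Tg q t
      = Tg q t * (Tg q t * Yig q t * Tg q t) * Xg q t * Tg q t := by rw [Tg_mul_Yig_mul_Tg]
    _ = Tg q t * Tg q t * Yig q t * (Tg q t * Xg q t * Tg q t) := by simp only [mul_assoc]
    _ = (q ^ 2)⁻¹ • (Xig q t * Yig q t) := by
      rw [Tg_mul_Xg_mul_Tg, Xig_mul_Yig, inv_smul_smul₀ (pow_ne_zero 2 hq)]

theorem Tg_mul_Yig_mul_Xg_mul_Tg (ht : t ≠ 0) :
    Tg q t * Yig q t * Xg q t * Tg q t = q ^ 2 • (Xig q t * Yg q t) := by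
  obtain ⟨T, hT⟩ := isUnit_Tg (q := q) ht
  calc Tg q t * Yig q t * Xg q t * Tg q t
      = (Tg q t * Yig q t * Tg q t) * ↑T⁻¹ * ↑T⁻¹ * (Tg q t * Xg q t * Tg q t) := by
        simp only [← hT, mul_assoc, Units.mul_inv_cancel_left, Units.inv_mul_cancel_left]
    _ = Xig q t * (Xg q t * Yg q t) * ↑T⁻¹ * ↑T⁻¹ * Xig q t := by
        rw [Tg_mul_Yig_mul_Tg, Tg_mul_Xg_mul_Tg, Xig_mul_Xg_mul]
    _ = q ^ 2 • (Xig q t * Yg q t) := by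
        rw [Xg_mul_Yg, ← hT]
        simp only [mul_smul_comm, smul_mul_assoc, mul_assoc, Units.mul_inv_cancel_left,
          Xg_mul_Xig, mul_one]

variable (hq : q ≠ 0) (ht : t ≠ 0)

def tauPlusHom : DAHA q t →ₐ[ℂ] DAHA q t :=
  lift (unitX q t) ((Units.mk0 q hq)⁻¹ • (unitX q t * unitY q t)) (Tg q t) Tg_mul_Xg_mul_Tg
    (by
      simp only [Units.smul_inv, inv_inv, mul_inv_rev, Units.val_smul, Units.val_mul,
        val_inv_unitY, val_inv_unitX, Units.smul_def, Units.val_mk0, mul_smul_comm,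
        ← mul_assoc, smul_mul_assoc, Units.val_inv_eq_inv_val]
      rw [Tg_mul_Yig_mul_Xig_mul_Tg hq, smul_smul]
      congr 1
      field_simp)
    (by
      simp only [Units.val_smul, Units.val_mul, Units.smul_def,
        Units.val_inv_eq_inv_val, Units.val_mk0, mul_smul_comm, mul_assoc, smul_mul_assoc]
      rw [Xg_mul_Yg]
      simp only [mul_smul_comm, smul_smul, mul_assoc]
      rw [mul_comm])
    Tg_hecke

def tauPlusInvHom : DAHA q t →ₐ[ℂ] DAHA q t :=
  lift (unitX q t) (Units.mk0 q hq • ((unitX q t)⁻¹ * unitY q t)) (Tg q t) Tg_mul_Xg_mul_Tg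
    (by
      simp only [Units.smul_inv, mul_inv_rev, inv_inv, Units.val_smul, Units.val_mul,
        val_inv_unitY, Units.smul_def, Units.val_inv_eq_inv_val, Units.val_mk0,
        mul_smul_comm, ← mul_assoc, smul_mul_assoc, val_inv_unitX]
      rw [Tg_mul_Yig_mul_Xg_mul_Tg ht, smul_smul]
      congr 1
      field_simp)
    (by
      simp only [Units.val_smul, Units.val_mul, val_inv_unitX,
        Units.smul_def, Units.val_mk0, mul_smul_comm, mul_assoc, smul_mul_assoc, Xg_mul_Xig_mul]
      conv_lhs => rw [← Xig_mul_Xg_mul (Yg q t), Xg_mul_Yg]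
      simp only [mul_smul_comm, smul_smul, mul_assoc]
      rw [mul_comm])
    Tg_hecke

def tauMinusHom : DAHA q t →ₐ[ℂ] DAHA q t :=
  lift (Units.mk0 q hq • (unitY q t * unitX q t)) (unitY q t) (Tg q t)
    (by
      simp only [Units.val_smul, Units.val_mul, Units.smul_def,
        Units.val_mk0, mul_smul_comm, ← mul_assoc, smul_mul_assoc, Units.smul_inv, mul_inv_rev,
        val_inv_unitX, val_inv_unitY, Units.val_inv_eq_inv_val]
      rw [Tg_mul_Yg_mul_Xg_mul_Tg hq, smul_smul]
      congr 1
      field_simp)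
    Tg_mul_Yig_mul_Tg
    (by
      simp only [Units.val_smul, Units.val_mul, Units.smul_def,
        Units.val_mk0, smul_mul_assoc, mul_smul_comm, mul_assoc]
      rw [Xg_mul_Yg]
      simp only [mul_smul_comm, smul_smul, mul_assoc]
      rw [mul_comm])
    Tg_hecke

def tauMinusInvHom : DAHA q t →ₐ[ℂ] DAHA q t :=
  lift ((Units.mk0 q hq)⁻¹ • ((unitY q t)⁻¹ * unitX q t)) (unitY q t) (Tg q t)
    (by
      simp only [Units.val_smul, Units.val_mul, val_inv_unitY, Units.smul_def,
        Units.val_inv_eq_inv_val, Units.val_mk0, mul_smul_comm, ← mul_assoc, smul_mul_assoc,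
        Units.smul_inv, inv_inv, mul_inv_rev, val_inv_unitX]
      rw [Tg_mul_Yig_mul_Xg_mul_Tg ht, smul_smul]
      congr 1
      field_simp)
    Tg_mul_Yig_mul_Tg
    (by
      simp only [Units.val_smul, Units.val_mul, val_inv_unitY, Units.smul_def,
        Units.val_inv_eq_inv_val, Units.val_mk0, smul_mul_assoc, mul_smul_comm,
        mul_assoc, Yg_mul_Yig_mul]
      rw [Xg_mul_Yg]
      simp only [mul_smul_comm, smul_smul, mul_assoc, Yig_mul_Yg_mul]
      rw [mul_comm])
    Tg_hecke

def tauPlus : DAHA q t ≃ₐ[ℂ] DAHA q t :=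
  AlgEquiv.ofAlgHom (tauPlusHom hq) (tauPlusInvHom hq ht)
    (by
      refine algHom_ext ?_ ?_ ?_ <;>
        simp [tauPlusHom, tauPlusInvHom, Units.smul_def, smul_smul, hq, Xig_mul_Xg_mul])
    (by
      refine algHom_ext ?_ ?_ ?_ <;>
        simp [tauPlusHom, tauPlusInvHom, Units.smul_def, smul_smul, hq, Xg_mul_Xig_mul])

def tauMinus : DAHA q t ≃ₐ[ℂ] DAHA q t :=
  AlgEquiv.ofAlgHom (tauMinusHom hq) (tauMinusInvHom hq ht)
    (by
      refine algHom_ext ?_ ?_ ?_ <;>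
        simp [tauMinusHom, tauMinusInvHom, Units.smul_def, smul_smul, hq, Yig_mul_Yg_mul])
    (by
      refine algHom_ext ?_ ?_ ?_ <;>
        simp [tauMinusHom, tauMinusInvHom, Units.smul_def, smul_smul, hq, Yg_mul_Yig_mul])

theorem existsUnique_algEquiv_eq_on_generators {A : Type*} [Ring A] [Algebra ℂ A]
    (e : DAHA q t ≃ₐ[ℂ] A) :
    ∃! τ : DAHA q t ≃ₐ[ℂ] A,
      τ (Xg q t) = e (Xg q t) ∧ τ (Tg q t) = e (Tg q t) ∧ τ (Yg q t) = e (Yg q t) :=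
  ⟨e, ⟨rfl, rfl, rfl⟩, fun _ ⟨hX, hT, hY⟩ ↦ AlgEquiv.coe_toAlgHom_injective (algHom_ext hX hY hT)⟩

end DAHA

/-- The assignments `τ⁺(X) = X`, `τ⁺(T) = T`, `τ⁺(Y) = q⁻¹XY` and `τ⁻(X) = qYX`,
`τ⁻(T) = T`, `τ⁻(Y) = Y` extend uniquely to ℂ-algebra automorphisms of `H_{q,t}`. -/
theorem daha_tau_automorphisms (q t : ℂ) (hq : q ≠ 0) (ht : t ≠ 0) :
    (∃! τp : DAHA q t ≃ₐ[ℂ] DAHA q t,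
      τp (Xg q t) = Xg q t ∧ τp (Tg q t) = Tg q t ∧
        τp (Yg q t) = q⁻¹ • (Xg q t * Yg q t)) ∧
    (∃! τm : DAHA q t ≃ₐ[ℂ] DAHA q t,
      τm (Xg q t) = q • (Yg q t * Xg q t) ∧ τm (Tg q t) = Tg q t ∧
        τm (Yg q t) = Yg q t) := by
  constructor
  · simpa [DAHA.tauPlus, DAHA.tauPlusHom, Units.smul_def] using
      DAHA.existsUnique_algEquiv_eq_on_generators (DAHA.tauPlus hq ht)
  · simpa [DAHA.tauMinus, DAHA.tauMinusHom, Units.smul_def] using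
      DAHA.existsUnique_algEquiv_eq_on_generators (DAHA.tauMinus hq ht)
end
end
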